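/- The number of permutations of {1,…,n} (n ≥ 2) avoiding the three consecutive patterns 123, 231, 312 equals n · E_{n-1}, where E_m is the m-th Euler (zigzag) number counting alternating permutations of length m. -/

import Mathlib

/-!
Both families are counted through generalized Lehmer codes: a permutation `σ` of `Fin n` is
recorded by the rank `b j < n - j` of `σ j` among the values not used before position `j`, where
the order used at step `j` may depend on the values already placed. Whatever these orders are,
the code is injective, hence a bijection onto all `n!` codes.

Ranking by the cyclic distance down from the previous value, `σ` avoids `123`, `231`, `312`
consecutively iff `b (i + 1) + b (i + 2) < n - (i + 2)` for all `i`, while `b 0` is free.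
Ranking alternately by `<` and `>`, a permutation of `Fin m` is alternating iff
`m - (j + 1) ≤ c j + c (j + 1)` for all `j`. With `n = m + 1`, the reflection
`c j = m - (j + 1) - b (j + 1)` turns the first condition into the second, and `b 0` contributes
the factor `n`.
-/

/-- The Euler (zigzag) number `E m`: the number of alternating permutations
τ ∈ S_m with τ(1) > τ(2) < τ(3) > ⋯ . -/
noncomputable def eulerNumber (m : ℕ) : ℕ :=
  Nat.card {τ : Equiv.Perm (Fin m) //
    ∀ (i : ℕ) (h : i + 1 < m),
      if i % 2 = 0 then τ ⟨i + 1, h⟩ < τ ⟨i, by omega⟩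
      else τ ⟨i, by omega⟩ < τ ⟨i + 1, h⟩}

open Finset Function Equiv
open scoped Nat

section Counting

variable {α : Type*} [DecidableEq α] {s : Finset α} {p q : α → Prop} [DecidablePred p]
  [DecidablePred q]

theorem card_le_card_filter_add_card_filter (h : ∀ y ∈ s, p y ∨ q y) :
    #s ≤ #{y ∈ s | p y} + #{y ∈ s | q y} :=
  calc #s = #{y ∈ s | p y ∨ q y} := by rw [filter_true_of_mem h]
    _ ≤ #{y ∈ s | p y} + #{y ∈ s | q y} := by rw [filter_or]; exact card_union_le _ _

theorem card_filter_add_card_filter_lt (h : ∀ y ∈ s, p y → ¬q y) {c : α} (hc : c ∈ s)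
    (hpc : ¬p c) (hqc : ¬q c) : #{y ∈ s | p y} + #{y ∈ s | q y} < #s := by
  rw [← card_union_of_disjoint (disjoint_filter.2 h), ← filter_or]
  exact card_lt_card (filter_ssubset.2 ⟨c, hc, by tauto⟩)

theorem lt_iff_card_le_card_filter_add_card_filter {β : Type*} [LinearOrder β] (k : α → β)
    {u v : α} (hv : v ∈ s) : k v < k u ↔ #s ≤ #{y ∈ s | k y < k u} + #{y ∈ s | k v < k y} := by
  refine ⟨fun h => card_le_card_filter_add_card_filter fun y _ => ?_, fun h => ?_⟩
  · exact (lt_or_ge (k y) (k u)).imp_right h.trans_le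
  · by_contra! hvu
    refine (card_filter_add_card_filter_lt (q := fun y => k v < k y) (fun y _ hyu hvy => ?_) hv
      hvu.not_gt (lt_irrefl _)).not_ge h
    exact (hyu.trans_le hvu).not_gt hvy

end Counting

section Rank

variable {α β : Type*} [LinearOrder β] {k : α → β} {s : Finset α} {x y : α}

def rank (k : α → β) (s : Finset α) (x : α) : ℕ := #{y ∈ s | k y < k x}

theorem rank_lt_card (hx : x ∈ s) : rank k s x < #s :=
  card_lt_card (filter_ssubset.2 ⟨x, hx, lt_irrefl _⟩)

theorem rank_lt_rank (hx : x ∈ s) (h : k x < k y) : rank k s x < rank k s y :=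
  card_lt_card <| (ssubset_iff_of_subset fun _ hz => mem_filter.2
      ⟨(mem_filter.1 hz).1, (mem_filter.1 hz).2.trans h⟩).2
    ⟨x, mem_filter.2 ⟨hx, h⟩, fun hx' => lt_irrefl _ (mem_filter.1 hx').2⟩

theorem rank_injOn (hk : Injective k) : Set.InjOn (rank k s) s := by
  intro x hx y hy h
  rcases lt_trichotomy (k x) (k y) with hxy | hxy | hxy
  · exact absurd h (rank_lt_rank hx hxy).ne
  · exact hk hxy
  · exact absurd h (rank_lt_rank hy hxy).ne'

theorem rank_insert_self [DecidableEq α] (k : α → β) (s : Finset α) (x : α) :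
    rank k (insert x s) x = rank k s x := by
  simp [rank, filter_insert]

end Rank

theorem prod_univ_fin_sub_eq_factorial (n : ℕ) : ∏ j : Fin n, (n - (j : ℕ)) = n ! := by
  rw [Fin.prod_univ_eq_prod_range (fun j => n - j), ← prod_range_reflect,
    ← prod_range_add_one_eq_factorial]
  exact prod_congr rfl fun j hj => by simp at hj; omega

section LehmerCode

variable {n : ℕ}

def unused (σ : Perm (Fin n)) (j : ℕ) : Finset (Fin n) :=
  (({i | (i : ℕ) < j} : Finset (Fin n)).image σ)ᶜ

theorem apply_mem_unused_iff (σ : Perm (Fin n)) (i : Fin n) (j : ℕ) :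
    σ i ∈ unused σ j ↔ j ≤ i := by
  simp [unused]

theorem card_unused (σ : Perm (Fin n)) {j : ℕ} (hj : j ≤ n) : #(unused σ j) = n - j := by
  rw [unused, card_compl, card_image_of_injective _ σ.injective, Fin.card_filter_val_lt,
    Fintype.card_fin, min_eq_right hj]

theorem unused_eq_insert (σ : Perm (Fin n)) (i : Fin n) :
    unused σ i = insert (σ i) (unused σ (i + 1)) := by
  ext x
  obtain ⟨l, rfl⟩ := σ.surjective x
  simp only [mem_insert, apply_mem_unused_iff, σ.injective.eq_iff, Fin.ext_iff]
  omega

theorem unused_congr {σ τ : Perm (Fin n)} {j : ℕ} (h : ∀ i : Fin n, (i : ℕ) < j → σ i = τ i) :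
    unused σ j = unused τ j := by
  rw [unused, unused, image_congr fun i hi => h i (by simpa using hi)]

def lehmerCode (key : (j : ℕ) → (Fin j → Fin n) → Fin n → ℕ) (σ : Perm (Fin n)) (j : Fin n) :
    Fin (n - j) :=
  ⟨rank (key j (σ ∘ Fin.castLE j.isLt.le)) (unused σ j) (σ j),
    card_unused σ j.isLt.le ▸ rank_lt_card ((apply_mem_unused_iff σ j j).2 le_rfl)⟩

variable {key : (j : ℕ) → (Fin j → Fin n) → Fin n → ℕ}

theorem val_lehmerCode (σ : Perm (Fin n)) (j : Fin n) :
    (lehmerCode key σ j : ℕ) = rank (key j (σ ∘ Fin.castLE j.isLt.le)) (unused σ j) (σ j) :=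
  rfl

theorem val_lehmerCode_eq_rank_unused_succ (σ : Perm (Fin n)) (j : Fin n) :
    (lehmerCode key σ j : ℕ) =
      rank (key j (σ ∘ Fin.castLE j.isLt.le)) (unused σ (j + 1)) (σ j) := by
  rw [val_lehmerCode, unused_eq_insert, rank_insert_self]

theorem lehmerCode_injective (hkey : ∀ j p, Injective (key j p)) :
    Injective (lehmerCode key) := by
  intro σ τ h
  have agree : ∀ j : ℕ, ∀ i : Fin n, (i : ℕ) < j → σ i = τ i := by
    intro j
    induction j with
    | zero => exact fun i hi => absurd hi (Nat.not_lt_zero _)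
    | succ j ih =>
      intro i hi
      rcases Nat.lt_succ_iff_lt_or_eq.1 hi with hi | rfl
      · exact ih i hi
      · have hprefix : σ ∘ Fin.castLE i.isLt.le = τ ∘ Fin.castLE i.isLt.le :=
          funext fun l => ih _ l.isLt
        have hrank := congrArg Fin.val (congrFun h i)
        rw [val_lehmerCode, val_lehmerCode, hprefix, unused_congr ih] at hrank
        exact rank_injOn (hkey _ _) (unused_congr ih ▸ (apply_mem_unused_iff σ i i).2 le_rfl)
          ((apply_mem_unused_iff τ i i).2 le_rfl) hrank
  exact Equiv.ext fun i => agree _ i (Nat.lt_succ_self _)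

theorem lehmerCode_bijective (hkey : ∀ j p, Injective (key j p)) :
    Bijective (lehmerCode key) := by
  refine (Nat.bijective_iff_injective_and_card _).2 ⟨lehmerCode_injective hkey, ?_⟩
  rw [Nat.card_perm, Nat.card_pi]
  simp [prod_univ_fin_sub_eq_factorial]

theorem card_subtype_eq_card_subtype_lehmerCode (hkey : ∀ j p, Injective (key j p))
    {P : Perm (Fin n) → Prop} {Q : ((j : Fin n) → Fin (n - j)) → Prop}
    (h : ∀ σ, P σ ↔ Q (lehmerCode key σ)) : Nat.card {σ // P σ} = Nat.card {c // Q c} :=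
  Nat.card_congr ((Equiv.ofBijective _ (lehmerCode_bijective hkey)).subtypeEquiv h)

end LehmerCode

section CyclicDist

variable {n : ℕ}

def cyclicDist (a x : Fin n) : ℕ := if x ≤ a then a - x else a + n - x

theorem cyclicDist_lt (a x : Fin n) : cyclicDist a x < n := by
  unfold cyclicDist; split_ifs <;> omega

theorem cyclicDist_injective (a : Fin n) : Injective (cyclicDist a) := by
  intro x y h
  unfold cyclicDist at h
  ext
  split_ifs at h <;> omega

theorem cyclicDist_add_cyclicDist (a q x : Fin n) :
    cyclicDist a q + cyclicDist q x = cyclicDist a x ∨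
      cyclicDist a q + cyclicDist q x = cyclicDist a x + n := by
  unfold cyclicDist; split_ifs <;> omega

/-- `123`, `231`, `312` are the rotations of `123`, so a triple avoids them iff it runs down the
cycle `a → q → c` in less than one full turn. -/
theorem avoids_123_231_312_iff_cyclicDist_add_lt {a q c : Fin n} (hac : a ≠ c) :
    (¬(a < q ∧ q < c) ∧ ¬(c < a ∧ a < q) ∧ ¬(q < c ∧ c < a)) ↔
      cyclicDist a q + cyclicDist q c < n := by
  rw [Ne, Fin.ext_iff] at hac
  simp only [Fin.lt_def, cyclicDist, Fin.le_def]
  split_ifs <;> omega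

theorem cyclicDist_add_lt_iff_card_filter_add_card_filter_lt {s : Finset (Fin n)} {a q c : Fin n}
    (hc : c ∈ s) :
    cyclicDist a q + cyclicDist q c < n ↔
      #{y ∈ s | cyclicDist a y < cyclicDist a q} + #{y ∈ s | cyclicDist q y < cyclicDist q c}
        < #s := by
  refine ⟨fun h => card_filter_add_card_filter_lt (fun y _ hay hqy => ?_) hc ?_ (lt_irrefl _),
    fun h => ?_⟩
  · have := cyclicDist_add_cyclicDist a q y
    omega
  · have := cyclicDist_add_cyclicDist a q c
    omega
  · by_contra! hn
    refine h.not_ge (card_le_card_filter_add_card_filter fun y _ => ?_)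
    have := cyclicDist_add_cyclicDist a q y
    have := cyclicDist_lt a y
    have := cyclicDist_lt q y
    omega

end CyclicDist

section Avoiding

variable {n : ℕ}

def Avoids123231312 (π : Perm (Fin n)) : Prop :=
  ∀ (i : ℕ) (h : i + 2 < n),
    ¬(π ⟨i, by linarith⟩ < π ⟨i + 1, by linarith⟩ ∧ π ⟨i + 1, by linarith⟩ < π ⟨i + 2, h⟩) ∧
    ¬(π ⟨i + 2, h⟩ < π ⟨i, by linarith⟩ ∧ π ⟨i, by linarith⟩ < π ⟨i + 1, by linarith⟩) ∧
    ¬(π ⟨i + 1, by linarith⟩ < π ⟨i + 2, h⟩ ∧ π ⟨i + 2, h⟩ < π ⟨i, by linarith⟩)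

def AdjacentSumsSmall (b : (j : Fin n) → Fin (n - j)) : Prop :=
  ∀ (i : ℕ) (h : i + 2 < n), (b ⟨i + 1, by linarith⟩ : ℕ) + b ⟨i + 2, h⟩ < n - (i + 2)

def cyclicKey : (j : ℕ) → (Fin j → Fin n) → Fin n → ℕ
  | 0, _ => Fin.val
  | i + 1, p => cyclicDist (p (Fin.last i))

theorem cyclicKey_injective : ∀ j p, Injective (cyclicKey (n := n) j p)
  | 0, _ => Fin.val_injective
  | _ + 1, _ => cyclicDist_injective _

theorem avoids123231312_iff_adjacentSumsSmall (π : Perm (Fin n)) :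
    Avoids123231312 π ↔ AdjacentSumsSmall (lehmerCode cyclicKey π) := by
  refine forall_congr' fun i => forall_congr' fun h => ?_
  rw [avoids_123_231_312_iff_cyclicDist_add_lt (by simp),
    cyclicDist_add_lt_iff_card_filter_add_card_filter_lt
      ((apply_mem_unused_iff π ⟨i + 2, h⟩ (i + 2)).2 le_rfl),
    card_unused π h.le, val_lehmerCode_eq_rank_unused_succ, val_lehmerCode]
  rfl

end Avoiding

section Alternating

variable {n : ℕ}

def IsAlternating (τ : Perm (Fin n)) : Prop :=
  ∀ (i : ℕ) (h : i + 1 < n),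
    if i % 2 = 0 then τ ⟨i + 1, h⟩ < τ ⟨i, by linarith⟩ else τ ⟨i, by linarith⟩ < τ ⟨i + 1, h⟩

def AdjacentSumsLarge (c : (j : Fin n) → Fin (n - j)) : Prop :=
  ∀ (j : ℕ) (h : j + 1 < n), n - (j + 1) ≤ (c ⟨j, by linarith⟩ : ℕ) + c ⟨j + 1, h⟩

def alternatingKey (j : ℕ) (_ : Fin j → Fin n) (x : Fin n) : ℕ :=
  if j % 2 = 0 then x else x.rev

theorem alternatingKey_injective (j : ℕ) (p : Fin j → Fin n) :
    Injective (alternatingKey j p) := by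
  intro x y h
  unfold alternatingKey at h
  split_ifs at h
  · exact Fin.val_injective h
  · exact Fin.rev_injective (Fin.val_injective h)

theorem alternatingKey_succ_lt_iff {j : ℕ} (p : Fin j → Fin n) (p' : Fin (j + 1) → Fin n)
    (x y : Fin n) : alternatingKey (j + 1) p' x < alternatingKey (j + 1) p' y ↔
      alternatingKey j p y < alternatingKey j p x := by
  have := x.isLt
  have := y.isLt
  simp only [alternatingKey, Fin.val_rev]
  split_ifs <;> omega

theorem isAlternating_iff_adjacentSumsLarge (τ : Perm (Fin n)) :
    IsAlternating τ ↔ AdjacentSumsLarge (lehmerCode alternatingKey τ) := by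
  refine forall_congr' fun j => forall_congr' fun h => ?_
  set p := τ ∘ Fin.castLE (n := j) (by omega)
  have hstep :
      (if j % 2 = 0 then τ ⟨j + 1, h⟩ < τ ⟨j, by omega⟩ else τ ⟨j, by omega⟩ < τ ⟨j + 1, h⟩) ↔
        alternatingKey j p (τ ⟨j + 1, h⟩) < alternatingKey j p (τ ⟨j, by omega⟩) := by
    unfold alternatingKey
    split_ifs
    · rfl
    · simp only [Fin.val_rev, Fin.lt_def]; omega
  rw [hstep, lt_iff_card_le_card_filter_add_card_filter _
      ((apply_mem_unused_iff τ ⟨j + 1, h⟩ (j + 1)).2 le_rfl),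
    card_unused τ h.le, val_lehmerCode_eq_rank_unused_succ, val_lehmerCode]
  simp only [rank, alternatingKey_succ_lt_iff p]
  rfl

end Alternating

section SplitCode

variable {m : ℕ}

def splitCode (m : ℕ) :
    ((j : Fin (m + 1)) → Fin (m + 1 - j)) ≃ ((j : Fin m) → Fin (m - j)) × Fin (m + 1) :=
  (Fin.consEquiv _).symm.trans <| (prodComm _ _).trans <|
    prodCongr (piCongrRight fun j => (finCongr (by simp)).trans Fin.revPerm) (finCongr (by simp))

theorem val_splitCode_fst (b : (j : Fin (m + 1)) → Fin (m + 1 - j)) (j : ℕ) (hj : j < m) :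
    ((splitCode m b).1 ⟨j, hj⟩ : ℕ) = m - (j + 1) - b ⟨j + 1, by omega⟩ := by
  change ((Fin.cast (by simp) (b ⟨j + 1, _⟩)).rev : ℕ) = _
  simp only [Fin.val_rev, Fin.val_cast]
  omega

theorem adjacentSumsSmall_iff_adjacentSumsLarge_splitCode
    (b : (j : Fin (m + 1)) → Fin (m + 1 - j)) :
    AdjacentSumsSmall b ↔ AdjacentSumsLarge (splitCode m b).1 := by
  refine ⟨fun H j hj => ?_, fun H j hj => ?_⟩ <;>
  · have h1 : (b ⟨j + 1, by omega⟩ : ℕ) < m + 1 - (j + 1) := (b _).isLt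
    have h2 : (b ⟨j + 2, by omega⟩ : ℕ) < m + 1 - (j + 2) := (b _).isLt
    have e1 := val_splitCode_fst b j (by omega)
    have e2 : ((splitCode m b).1 ⟨j + 1, by omega⟩ : ℕ) = m - (j + 2) - b ⟨j + 2, by omega⟩ :=
      val_splitCode_fst b (j + 1) (by omega)
    have := H j (by omega)
    simp only [e1, e2] at this ⊢
    omega

theorem card_adjacentSumsSmall (m : ℕ) :
    Nat.card {b : (j : Fin (m + 1)) → Fin (m + 1 - j) // AdjacentSumsSmall b} =
      Nat.card {c : (j : Fin m) → Fin (m - j) // AdjacentSumsLarge c} * (m + 1) := by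
  rw [Nat.card_congr (((splitCode m).subtypeEquiv
      adjacentSumsSmall_iff_adjacentSumsLarge_splitCode).trans prodSubtypeFstEquivSubtypeProd),
    Nat.card_prod, Nat.card_eq_fintype_card (α := Fin _), Fintype.card_fin]

end SplitCode

theorem eulerNumber_eq_card_adjacentSumsLarge (m : ℕ) :
    eulerNumber m = Nat.card {c : (j : Fin m) → Fin (m - j) // AdjacentSumsLarge c} :=
  card_subtype_eq_card_subtype_lehmerCode alternatingKey_injective
    isAlternating_iff_adjacentSumsLarge

/-- For n ≥ 2, the number of permutations of {1,…,n} avoiding the three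
consecutive patterns 123, 231, 312 equals n · E_{n-1}. -/
theorem consecutive_avoid_123_231_312_count (n : ℕ) (hn : 2 ≤ n) :
    Nat.card {π : Equiv.Perm (Fin n) //
      ∀ (i : ℕ) (h : i + 2 < n),
        -- no consecutive occurrence of 123: π(i) < π(i+1) < π(i+2)
        ¬(π ⟨i, by omega⟩ < π ⟨i + 1, by omega⟩ ∧ π ⟨i + 1, by omega⟩ < π ⟨i + 2, h⟩) ∧
        -- no consecutive occurrence of 231: π(i+2) < π(i) < π(i+1)
        ¬(π ⟨i + 2, h⟩ < π ⟨i, by omega⟩ ∧ π ⟨i, by omega⟩ < π ⟨i + 1, by omega⟩) ∧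
        -- no consecutive occurrence of 312: π(i+1) < π(i+2) < π(i)
        ¬(π ⟨i + 1, by omega⟩ < π ⟨i + 2, h⟩ ∧ π ⟨i + 2, h⟩ < π ⟨i, by omega⟩)} =
      n * eulerNumber (n - 1) := by
  obtain ⟨m, rfl⟩ : ∃ m, n = m + 1 := ⟨n - 1, by omega⟩
  calc Nat.card {π : Perm (Fin (m + 1)) // Avoids123231312 π}
      = Nat.card {b : (j : Fin (m + 1)) → Fin (m + 1 - j) // AdjacentSumsSmall b} :=
        card_subtype_eq_card_subtype_lehmerCode cyclicKey_injective
          avoids123231312_iff_adjacentSumsSmall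
    _ = Nat.card {c : (j : Fin m) → Fin (m - j) // AdjacentSumsLarge c} * (m + 1) :=
        card_adjacentSumsSmall m
    _ = (m + 1) * eulerNumber (m + 1 - 1) := by
        rw [Nat.add_sub_cancel, eulerNumber_eq_card_adjacentSumsLarge, mul_comm]
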